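/- For any graph H with chromatic number χ(H) ≤ 3 and p = 2, every graph obtained from H by simultaneously splitting all vertices of an independent set U of H (replacing each v ∈ U by deg(v) new degree-one vertices, one per neighbor) belongs to the decomposition family M(H^3); in particular, for each such split graph S and t = |V(H^3)|, H^3 ⊆ S ∨ I_t. -/

import Mathlib

open SimpleGraph

/-- The lollipop `C_{k,ℓ}`: a cycle on vertices `0,…,k-1` together with a pendant
path `0, k, k+1, …, k+ℓ-1` appended to the cycle vertex `0` (the *center*). -/
def lollipop (k l : ℕ) : SimpleGraph (Fin (k + l)) :=
  SimpleGraph.fromRel (fun a b =>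
    (b.val = a.val + 1 ∧ b.val < k) ∨ (a.val = 0 ∧ b.val = k - 1) ∨
    (a.val = 0 ∧ b.val = k) ∨ (b.val = a.val + 1 ∧ k ≤ a.val))

/-- The edge blow-up `H^{p+1}` of a graph `H`: each edge of `H` is replaced by a
clique of order `p+1`, the `p-1` new vertices of the cliques being all distinct. -/
def edgeBlowup {V : Type*} (H : SimpleGraph V) (p : ℕ) :
    SimpleGraph (V ⊕ (H.edgeSet × Fin (p - 1))) where
  Adj x y := match x, y with
    | .inl a, .inl b => H.Adj a b
    | .inl a, .inr e => a ∈ (e.1 : Sym2 V)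
    | .inr e, .inl a => a ∈ (e.1 : Sym2 V)
    | .inr e, .inr f => e.1 = f.1 ∧ e.2 ≠ f.2
  symm := by constructor; rintro (a | e) (b | f) h <;> simp_all <;> tauto
  loopless := by constructor; rintro (a | e) h <;> simp_all

/-- `A` is contained in `B` as a subgraph (there is an injective graph homomorphism). -/
def IsCont {α β : Type*} (A : SimpleGraph α) (B : SimpleGraph β) : Prop :=
  ∃ f : α → β, Function.Injective f ∧ ∀ ⦃a b⦄, A.Adj a b → B.Adj (f a) (f b)

/-- The join `G ∨ H` of two graphs: all edges between the two graphs are added. -/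
def gJoin {α β : Type*} (G : SimpleGraph α) (H : SimpleGraph β) : SimpleGraph (α ⊕ β) where
  Adj x y := match x, y with
    | .inl a, .inl b => G.Adj a b
    | .inr a, .inr b => H.Adj a b
    | .inl _, .inr _ => True
    | .inr _, .inl _ => True
  symm := by constructor; rintro (a | a) (b | b) h <;> first | exact h.symm | trivial
  loopless := by constructor; rintro (a | a) h <;> first | exact G.loopless.irrefl _ h | exact H.loopless.irrefl _ h

/-- The disjoint union of two graphs. -/
def dUnion {α β : Type*} (G : SimpleGraph α) (H : SimpleGraph β) : SimpleGraph (α ⊕ β) where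
  Adj x y := match x, y with
    | .inl a, .inl b => G.Adj a b
    | .inr a, .inr b => H.Adj a b
    | _, _ => False
  symm := by constructor; rintro (a | a) (b | b) h <;> first | exact h.symm | exact h
  loopless := by constructor; rintro (a | a) h <;> first | exact G.loopless.irrefl _ h | exact H.loopless.irrefl _ h

/-- `a` vertex-disjoint copies of the graph `G`. -/
def copies {β : Type*} (a : ℕ) (G : SimpleGraph β) : SimpleGraph (Fin a × β) where
  Adj x y := x.1 = y.1 ∧ G.Adj x.2 y.2
  symm := by constructor; rintro x y ⟨h1, h2⟩; exact ⟨h1.symm, h2.symm⟩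
  loopless := by constructor; rintro x ⟨h1, h2⟩; exact G.loopless.irrefl _ h2

/-- The complete multipartite graph `K_{p}(m,…,m)` with `p` parts of size `m`. -/
def completeMultipartite (p m : ℕ) : SimpleGraph (Fin p × Fin m) where
  Adj x y := x.1 ≠ y.1
  symm := ⟨fun _ _ h => h.symm⟩

/-- `H(n,p,q) = K_{q-1} ∨ T_p(n-q+1)`. -/
def Hgraph (n p q : ℕ) : SimpleGraph (Fin (q - 1) ⊕ Fin (n - (q - 1))) :=
  gJoin (completeGraph (Fin (q - 1))) (turanGraph (n - (q - 1)) p)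

/-- The number of edges of a graph. -/
noncomputable def numEdges {α : Type*} (G : SimpleGraph α) : ℕ := Nat.card G.edgeSet

/-- `E` (a graph on `n` vertices) is the unique extremal `H`-free graph on `n`
vertices: it is `H`-free, every `H`-free graph on `n` vertices has at most as many
edges, and any `H`-free graph attaining this maximum is isomorphic to `E`. -/
def UniqueExtremal {W α : Type*} (H : SimpleGraph W) (n : ℕ) (E : SimpleGraph α) : Prop :=
  ¬ IsCont H E ∧ Nat.card α = n ∧
    ∀ G : SimpleGraph (Fin n), ¬ IsCont H G →
      numEdges G ≤ numEdges E ∧ (numEdges G = numEdges E → Nonempty (G ≃g E))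

/-- The member of the family `𝒴_{k+1,ℓ+1}` obtained from the path `P_{k+1}`
(on `Fin (k+1)`) by appending a path `P_{ℓ+1}` to its vertex `j` (the branching
vertex), the appended path having the `ℓ` extra vertices `Fin l`. -/
def Ygraph (k l j : ℕ) : SimpleGraph (Fin (k + 1) ⊕ Fin l) :=
  SimpleGraph.fromRel (fun x y => match x, y with
    | .inl a, .inl b => b.val = a.val + 1
    | .inl a, .inr b => a.val = j ∧ b.val = 0
    | .inr a, .inr b => b.val = a.val + 1
    | _, _ => False)

/-- The graph obtained from `H` by splitting every vertex of `U`: each `v ∈ U`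
is replaced by `deg v` new vertices, one for each neighbor `w` of `v`, joined to
`w` only. -/
def splitGraph {V : Type*} (H : SimpleGraph V) (U : Set V) :
    SimpleGraph ({v : V // v ∉ U} ⊕ {p : V × V // p.1 ∈ U ∧ H.Adj p.1 p.2}) where
  Adj x y := match x, y with
    | .inl a, .inl b => H.Adj a.1 b.1
    | .inl a, .inr e => e.1.2 = a.1
    | .inr e, .inl a => e.1.2 = a.1
    | .inr _, .inr _ => False
  symm := by constructor; rintro (a | e) (b | f) h <;> first | exact h.symm | exact h
  loopless := by constructor; rintro (a | e) h <;> simp_all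

/-!
Embed `H^3` into `S ∨ I_t` as follows. A vertex outside `U` is kept, a vertex of `U` is sent to
the independent side `I_t`. The apex of the triangle over an edge `uw` with `u ∈ U` becomes the
pendant vertex of `S` that replaced `u` at `w`: it is adjacent to `w` in `S` and to the image of
`u` across the join. Apexes over edges avoiding `U` go to `I_t`. Since `I_t` has no edges, this
needs `U` to be independent.
-/

section SplitJoinEmbedding

variable {V β : Type*} {H : SimpleGraph V} {U : Set V}

noncomputable def splitPendant {e : Sym2 V} (he : e ∈ H.edgeSet) {u : V} (hu : u ∈ e)
    (huU : u ∈ U) : {p : V × V // p.1 ∈ U ∧ H.Adj p.1 p.2} :=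
  ⟨(u, Sym2.Mem.other hu), huU, by rw [← mem_edgeSet, Sym2.other_spec hu]; exact he⟩

variable {e : Sym2 V} {he : e ∈ H.edgeSet} {u : V} {hu : u ∈ e} {huU : u ∈ U}

lemma splitPendant_sym2 :
    s((splitPendant he hu huU).1.1, (splitPendant he hu huU).1.2) = e :=
  Sym2.other_spec hu

lemma splitPendant_snd_eq {a : V} (ha : a ∈ e) (hau : a ≠ u) :
    (splitPendant he hu huU).1.2 = a := by
  rw [← splitPendant_sym2 (he := he) (huU := huU), Sym2.mem_iff] at ha
  exact (ha.resolve_left hau).symm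

lemma splitPendant_injective {e' : Sym2 V} {he' : e' ∈ H.edgeSet} {u' : V} {hu' : u' ∈ e'}
    {huU' : u' ∈ U} (h : splitPendant he hu huU = splitPendant he' hu' huU') : e = e' := by
  rw [← splitPendant_sym2 (he := he) (hu := hu) (huU := huU),
    ← splitPendant_sym2 (he := he') (hu := hu') (huU := huU'), h]

variable (U) in
open Classical in
noncomputable def blowupToSplitJoin (ι : V ⊕ (H.edgeSet × Fin (2 - 1)) → β) :
    V ⊕ (H.edgeSet × Fin (2 - 1)) →
      ({v : V // v ∉ U} ⊕ {p : V × V // p.1 ∈ U ∧ H.Adj p.1 p.2}) ⊕ β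
  | .inl v => if hv : v ∈ U then .inr (ι (.inl v)) else .inl (.inl ⟨v, hv⟩)
  | .inr x => if h : ∃ u ∈ (x.1 : Sym2 V), u ∈ U then
      .inl (.inr (splitPendant x.1.2 h.choose_spec.1 h.choose_spec.2))
    else .inr (ι (.inr x))

variable {ι : V ⊕ (H.edgeSet × Fin (2 - 1)) → β}

lemma blowupToSplitJoin_injective (hι : ι.Injective) : (blowupToSplitJoin U ι).Injective := by
  rintro (v | x) (w | y) hvw <;> simp only [blowupToSplitJoin] at hvw <;> split_ifs at hvw
  all_goals first
    | rfl
    | cases hvw <;> rfl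
    | cases hι (Sum.inr.inj hvw) <;> rfl
    | have hxy := splitPendant_injective (Sum.inr.inj (Sum.inl.inj hvw))
      exact congrArg Sum.inr (Prod.ext (Subtype.ext hxy) (Subsingleton.elim (α := Fin 1) _ _))

variable {K : SimpleGraph β}

lemma blowupToSplitJoin_adj_vertex_apex {a : V} {x : H.edgeSet × Fin (2 - 1)}
    (ha : a ∈ (x.1 : Sym2 V)) :
    (gJoin (splitGraph H U) K).Adj (blowupToSplitJoin U ι (.inl a))
      (blowupToSplitJoin U ι (.inr x)) := by
  simp only [blowupToSplitJoin]
  split_ifs with haU hx hx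
  · trivial
  · exact absurd ⟨a, ha, haU⟩ hx
  · exact splitPendant_snd_eq ha (ne_of_mem_of_not_mem hx.choose_spec.2 haU).symm
  · trivial

lemma blowupToSplitJoin_adj (hU : ∀ u ∈ U, ∀ v ∈ U, ¬ H.Adj u v) :
    ∀ ⦃a b⦄, (edgeBlowup H 2).Adj a b →
      (gJoin (splitGraph H U) K).Adj (blowupToSplitJoin U ι a) (blowupToSplitJoin U ι b) := by
  rintro (a | x) (b | y) hab
  · simp only [blowupToSplitJoin]
    split_ifs with haU hbU hbU
    · exact absurd hab (hU a haU b hbU)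
    · trivial
    · trivial
    · exact hab
  · exact blowupToSplitJoin_adj_vertex_apex hab
  · exact (blowupToSplitJoin_adj_vertex_apex hab).symm
  · exact absurd (Subsingleton.elim (α := Fin 1) _ _) hab.2

end SplitJoinEmbedding

theorem stmt17_general {V : Type*} [Fintype V] (H : SimpleGraph V)
    (U : Set V)
    (hU : ∀ u ∈ U, ∀ v ∈ U, ¬ H.Adj u v)
    (t : ℕ) (htt : t = Nat.card (V ⊕ (H.edgeSet × Fin (2 - 1)))) :
    IsCont (edgeBlowup H 2)
      (gJoin (splitGraph H U) (⊥ : SimpleGraph (Fin t))) := by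
  let ι := Finite.equivFinOfCardEq htt.symm
  exact ⟨blowupToSplitJoin U ι, blowupToSplitJoin_injective ι.injective,
    blowupToSplitJoin_adj hU⟩

/-- For any finite graph `H` with chromatic number at most `3` and
any independent set `U` of `H`, the graph `S` obtained from `H` by splitting all
vertices of `U` satisfies `H^3 ⊆ S ∨ I_t` with `t = |V(H^3)|`. -/
theorem stmt17 {V : Type*} [Fintype V] (H : SimpleGraph V)
    (hchr : H.chromaticNumber ≤ 3) (U : Set V)
    (hU : ∀ u ∈ U, ∀ v ∈ U, ¬ H.Adj u v)
    (t : ℕ) (htt : t = Nat.card (V ⊕ (H.edgeSet × Fin (2 - 1)))) :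
    IsCont (edgeBlowup H 2)
      (gJoin (splitGraph H U) (⊥ : SimpleGraph (Fin t))) :=
  stmt17_general H U hU t htt
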